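/- arXiv:1305.7499 — 2 statements merged into one kernel-verified Lean document; each statement's English description precedes it below -/
import Mathlib

section
/- Let N ≥ 1, and let u : B̄₁(0) × [−1, 0] → ℝ be continuous, C² in x and C¹ in t on B₁(0) × (−1, 0], satisfying u_t − Δu ≥ 1 in B₁(0) × (−1, 0] and u ≥ 0 on the parabolic boundary (B₁(0) × {t = −1}) ∪ (∂B₁(0) × [−1, 0)). Then for every x with |x| ≤ κ < 1, u(x, 0) ≥ (1 − κ²)/(1 + 4N). -/
open Metric Set Filter Topology Laplacian InnerProductSpace
open scoped RealInnerProductSpace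

/-!
Let `v(x, t) = (1 + t)(1 - |x|²)/(1 + 4N)`. It vanishes on the parabolic boundary and
`v_t - Δv ≤ (1 + 2N)/(1 + 4N) < 1`, so `w = u - v` is a strict supersolution of the heat
equation, nonnegative on the parabolic boundary. At a minimum point of `w` off the parabolic
boundary one would have `w_t ≤ 0` (a minimum in `t` on `[-1, 0]`, possibly at `t = 0`) and
`Δw ≥ 0` (an interior minimum in `x`), contradicting `w_t - Δw > 0`. Hence `w ≥ 0`, that is
`u(x, 0) ≥ v(x, 0) = (1 - |x|²)/(1 + 4N)`.
-/

theorem IsLocalMin.deriv_deriv_nonneg {f : ℝ → ℝ} {a : ℝ} (h : IsLocalMin f a)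
    (hf : ContinuousAt f a) : 0 ≤ deriv (deriv f) a := by
  by_contra! hneg
  -- the second derivative test makes `a` also a local maximum, so `f` is locally constant
  have hmax : IsLocalMax f a := isLocalMax_of_deriv_deriv_neg hneg h.deriv_eq_zero hf
  have hconst : f =ᶠ[𝓝 a] fun _ => f a := by
    filter_upwards [h, hmax] with x hmin hmax using le_antisymm hmax hmin
  have : deriv (deriv f) a = 0 := by
    rw [hconst.deriv.deriv_eq]
    simp
  exact hneg.ne this

theorem IsMinOn.deriv_nonpos_of_mem_Ioc {f : ℝ → ℝ} {a b t : ℝ} (h : IsMinOn f (Icc a b) t)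
    (ht : t ∈ Ioc a b) : deriv f t ≤ 0 := by
  by_cases hf : DifferentiableAt ℝ f t
  · have hseg : segment ℝ t a ⊆ Icc a b := by
      rw [segment_eq_Icc', min_eq_right ht.1.le, max_eq_left ht.1.le]
      exact Icc_subset_Icc_right ht.2
    have := h.localize.hasFDerivWithinAt_nonneg hf.hasFDerivAt.hasFDerivWithinAt
      (sub_mem_posTangentConeAt_of_segment_subset hseg)
    simp only [fderiv_eq_smul_deriv, smul_eq_mul] at this
    nlinarith [ht.1]
  · exact (deriv_zero_of_not_differentiableAt hf).le

theorem ContinuousOn.nonneg_of_nonneg_Ico {f : ℝ → ℝ} {a b : ℝ} (hab : a < b)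
    (hf : ContinuousOn f (Icc a b)) (h : ∀ t ∈ Ico a b, 0 ≤ f t) :
    ∀ t ∈ Icc a b, 0 ≤ f t :=
  fun t ht => ContinuousWithinAt.closure_le (by rwa [closure_Ico hab.ne])
    continuousWithinAt_const ((hf t ht).mono Ico_subset_Icc_self) h

section NormedSpace

variable {E G : Type*} [NormedAddCommGroup E] [NormedSpace ℝ E] [NormedAddCommGroup G]
  [NormedSpace ℝ G]

theorem ContDiffAt.deriv_deriv_comp_add_smul {F : E → G} {x : E} (hF : ContDiffAt ℝ 2 F x)
    (e : E) :
    deriv (deriv fun r : ℝ => F (x + r • e)) 0 = iteratedFDeriv ℝ 2 F x ![e, e] := by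
  have hline : ∀ r : ℝ, HasDerivAt (fun r : ℝ => x + r • e) e r := fun r => by
    simpa using ((hasDerivAt_id r).smul_const e).const_add x
  have hnear : ∀ᶠ r : ℝ in 𝓝 0, DifferentiableAt ℝ F (x + r • e) := by
    have hcont : Tendsto (fun r : ℝ => x + r • e) (𝓝 0) (𝓝 x) := by
      simpa using (hline 0).continuousAt.tendsto
    exact hcont.eventually <| (hF.eventually (by simp)).mono fun y hy =>
      hy.differentiableAt two_ne_zero
  have hderiv : deriv (fun r : ℝ => F (x + r • e)) =ᶠ[𝓝 0]
      fun r => fderiv ℝ F (x + r • e) e := by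
    filter_upwards [hnear] with r hr
    exact (hr.hasFDerivAt.comp_hasDerivAt r (hline r)).deriv
  have hF' : DifferentiableAt ℝ (fderiv ℝ F) x :=
    (hF.fderiv_right (m := 1) le_rfl).differentiableAt one_ne_zero
  have : HasDerivAt (fun r : ℝ => fderiv ℝ F (x + r • e)) (fderiv ℝ (fderiv ℝ F) x e) 0 :=
    hF'.hasFDerivAt.comp_hasDerivAt_of_eq (x := 0) (hline 0) (by simp)
  rw [hderiv.deriv_eq, iteratedFDeriv_two_apply]
  exact (this.clm_apply (hasDerivAt_const 0 e)).deriv.trans (by simp)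

theorem IsLocalMin.iteratedFDeriv_two_nonneg {F : E → ℝ} {x : E} (h : IsLocalMin F x)
    (hF : ContDiffAt ℝ 2 F x) (e : E) : 0 ≤ iteratedFDeriv ℝ 2 F x ![e, e] := by
  have hline : ContinuousAt (fun r : ℝ => x + r • e) 0 := by fun_prop
  rw [← hF.deriv_deriv_comp_add_smul e]
  refine IsLocalMin.deriv_deriv_nonneg ?_ ?_
  · exact IsLocalMin.comp_continuous (f := F) (by simpa using h) hline
  · exact ContinuousAt.comp_of_eq hF.continuousAt hline (by simp)

end NormedSpace

theorem laplacian_eq_sum_fderiv_fderiv_single {ι : Type*} [Fintype ι] [DecidableEq ι]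
    {f : EuclideanSpace ℝ ι → ℝ} {x : EuclideanSpace ℝ ι}
    (hf : DifferentiableAt ℝ (fderiv ℝ f) x) :
    Δ f x = ∑ i, fderiv ℝ (fun y => fderiv ℝ f y (EuclideanSpace.single i 1)) x
      (EuclideanSpace.single i 1) := by
  simp [laplacian_eq_iteratedFDeriv_orthonormalBasis f (EuclideanSpace.basisFun ι ℝ),
    iteratedFDeriv_two_apply, fderiv_clm_apply hf (differentiableAt_const _)]

section InnerProductSpace

variable {E : Type*} [NormedAddCommGroup E] [InnerProductSpace ℝ E]

theorem iteratedFDeriv_two_norm_sq (x e : E) :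
    iteratedFDeriv ℝ 2 (fun y : E => ‖y‖ ^ 2) x ![e, e] = 2 * ‖e‖ ^ 2 := by
  rw [← (contDiff_norm_sq ℝ).contDiffAt.deriv_deriv_comp_add_smul e]
  have hexp : (fun r : ℝ => ‖x + r • e‖ ^ 2) =
      fun r => ‖x‖ ^ 2 + 2 * ⟪x, e⟫ * r + ‖e‖ ^ 2 * r ^ 2 := by
    ext r
    rw [norm_add_sq_real, real_inner_smul_right, norm_smul, mul_pow, Real.norm_eq_abs, sq_abs]
    ring
  have hd : deriv (fun r : ℝ => ‖x + r • e‖ ^ 2) =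
      fun r => 2 * ⟪x, e⟫ + 2 * ‖e‖ ^ 2 * r := by
    ext r
    rw [hexp]
    exact ((((hasDerivAt_id r).const_mul _).const_add _).add
      ((hasDerivAt_pow 2 r).const_mul _)).deriv.trans (by ring)
  rw [hd]
  exact (((hasDerivAt_id 0).const_mul _).const_add _).deriv.trans (by simp)

variable (E) in
noncomputable def heatBarrier (x : E) (t : ℝ) : ℝ :=
  (1 + t) * (1 - ‖x‖ ^ 2) / (1 + 4 * Module.finrank ℝ E)

theorem continuous_heatBarrier : Continuous fun p : E × ℝ => heatBarrier E p.1 p.2 := by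
  unfold heatBarrier
  fun_prop

theorem contDiff_heatBarrier_left (t : ℝ) : ContDiff ℝ 2 fun x => heatBarrier E x t :=
  (contDiff_const.mul (contDiff_const.sub (contDiff_norm_sq ℝ))).div_const _

theorem hasDerivAt_heatBarrier_right (x : E) (t : ℝ) :
    HasDerivAt (heatBarrier E x) ((1 - ‖x‖ ^ 2) / (1 + 4 * Module.finrank ℝ E)) t := by
  unfold heatBarrier
  simpa using (((hasDerivAt_id t).const_add 1).mul_const (1 - ‖x‖ ^ 2)).div_const
    (1 + 4 * (Module.finrank ℝ E : ℝ))

variable [FiniteDimensional ℝ E]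

noncomputable def heatOperator (w : E → ℝ → ℝ) (x : E) (t : ℝ) : ℝ :=
  deriv (w x) t - Δ (fun y => w y t) x

theorem heatOperator_sub {u v : E → ℝ → ℝ} {x : E} {t : ℝ}
    (hux : ContDiffAt ℝ 2 (fun y => u y t) x) (hvx : ContDiffAt ℝ 2 (fun y => v y t) x)
    (hut : DifferentiableAt ℝ (u x) t) (hvt : DifferentiableAt ℝ (v x) t) :
    heatOperator (fun y s => u y s - v y s) x t = heatOperator u x t - heatOperator v x t := by
  have hΔ : Δ (fun y => u y t - v y t) x = Δ (fun y => u y t) x - Δ (fun y => v y t) x :=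
    hux.laplacian_sub hvx
  simp only [heatOperator, hΔ, deriv_fun_sub hut hvt]
  ring

theorem IsLocalMin.laplacian_nonneg {F : E → ℝ} {x : E} (h : IsLocalMin F x)
    (hF : ContDiffAt ℝ 2 F x) : 0 ≤ Δ F x := by
  rw [laplacian_eq_iteratedFDeriv_stdOrthonormalBasis]
  exact Finset.sum_nonneg fun i _ => h.iteratedFDeriv_two_nonneg hF _

theorem laplacian_norm_sq (x : E) : Δ (fun y : E => ‖y‖ ^ 2) x = 2 * Module.finrank ℝ E := by
  simp [laplacian_eq_iteratedFDeriv_stdOrthonormalBasis, iteratedFDeriv_two_norm_sq, mul_comm]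

theorem laplacian_heatBarrier (x : E) (t : ℝ) :
    Δ (fun y => heatBarrier E y t) x =
      -(2 * Module.finrank ℝ E * (1 + t) / (1 + 4 * Module.finrank ℝ E)) := by
  set α := (1 + t) / (1 + 4 * (Module.finrank ℝ E : ℝ))
  have hsplit : (fun y => heatBarrier E y t) = (fun _ => α) - α • fun y : E => ‖y‖ ^ 2 := by
    ext y
    simp only [heatBarrier, Pi.sub_apply, Pi.smul_apply, smul_eq_mul, α]
    ring
  have hsq : ContDiffAt ℝ 2 (fun y : E => ‖y‖ ^ 2) x := (contDiff_norm_sq ℝ).contDiffAt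
  have hαsq : ContDiffAt ℝ 2 (α • fun y : E => ‖y‖ ^ 2) x := hsq.const_smul α
  rw [hsplit, contDiffAt_const.laplacian_sub hαsq, laplacian_smul α hsq,
    laplacian_const, laplacian_norm_sq]
  simp only [Pi.zero_apply, smul_eq_mul, α]
  ring

theorem heatOperator_heatBarrier_lt_one (hE : 0 < Module.finrank ℝ E) (x : E) {t : ℝ}
    (ht : t ≤ 0) : heatOperator (heatBarrier E) x t < 1 := by
  have hn : (1 : ℝ) ≤ Module.finrank ℝ E := by exact_mod_cast hE
  rw [heatOperator, (hasDerivAt_heatBarrier_right x t).deriv, laplacian_heatBarrier,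
    sub_neg_eq_add, ← add_div, div_lt_one (by positivity)]
  nlinarith [sq_nonneg ‖x‖]

theorem heatOperator_sub_heatBarrier_pos (hE : 0 < Module.finrank ℝ E) {u : E → ℝ → ℝ}
    {x : E} {t : ℝ} (ht : t ≤ 0) (hux : ContDiffAt ℝ 2 (fun y => u y t) x)
    (hut : DifferentiableAt ℝ (u x) t) (hu : 1 ≤ heatOperator u x t) :
    0 < heatOperator (fun y s => u y s - heatBarrier E y s) x t := by
  rw [heatOperator_sub hux (contDiff_heatBarrier_left t).contDiffAt hut
    (hasDerivAt_heatBarrier_right x t).differentiableAt]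
  linarith [heatOperator_heatBarrier_lt_one hE x ht]

theorem nonneg_of_heatOperator_pos {Ω : Set E} (hΩ : IsOpen Ω) (hΩb : Bornology.IsBounded Ω)
    {a b : ℝ} {w : E → ℝ → ℝ}
    (hcont : ContinuousOn (fun p : E × ℝ => w p.1 p.2) (closure Ω ×ˢ Icc a b))
    (hw : ∀ x ∈ Ω, ∀ t ∈ Ioc a b, ContDiffAt ℝ 2 (fun y => w y t) x)
    (hpos : ∀ x ∈ Ω, ∀ t ∈ Ioc a b, 0 < heatOperator w x t)
    (hbot : ∀ x ∈ closure Ω, 0 ≤ w x a)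
    (hlat : ∀ x ∈ frontier Ω, ∀ t ∈ Icc a b, 0 ≤ w x t) :
    ∀ x ∈ closure Ω, ∀ t ∈ Icc a b, 0 ≤ w x t := by
  intro x hx t ht
  obtain ⟨⟨x₀, t₀⟩, ⟨hx₀, ht₀⟩, hmin⟩ :=
    (hΩb.isCompact_closure.prod isCompact_Icc).exists_isMinOn ⟨(x, t), hx, ht⟩ hcont
  replace hmin : ∀ y ∈ closure Ω, ∀ s ∈ Icc a b, w x₀ t₀ ≤ w y s :=
    fun y hy s hs => hmin (mk_mem_prod hy hs)
  suffices 0 ≤ w x₀ t₀ from this.trans (hmin x hx t ht)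
  by_contra! hneg
  have hx₀Ω : x₀ ∈ Ω := by
    by_contra hx₀Ω
    exact (hlat x₀ (hΩ.frontier_eq ▸ ⟨hx₀, hx₀Ω⟩) t₀ ht₀).not_gt hneg
  have ht₀' : t₀ ∈ Ioc a b :=
    ⟨ht₀.1.lt_of_ne fun h => (hbot x₀ hx₀).not_gt (h ▸ hneg), ht₀.2⟩
  have htime : deriv (w x₀) t₀ ≤ 0 :=
    IsMinOn.deriv_nonpos_of_mem_Ioc (fun s hs => hmin x₀ hx₀ s hs) ht₀'
  have hspace : 0 ≤ Δ (fun y => w y t₀) x₀ := by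
    refine IsLocalMin.laplacian_nonneg ?_ (hw x₀ hx₀Ω t₀ ht₀')
    filter_upwards [hΩ.mem_nhds hx₀Ω] with y hy using hmin y (subset_closure hy) t₀ ht₀
  have hheat : 0 < deriv (w x₀) t₀ - Δ (fun y => w y t₀) x₀ :=
    hpos x₀ hx₀Ω t₀ ht₀'
  linarith

end InnerProductSpace

theorem heat_growth_lemma (N : ℕ) (hN : 1 ≤ N)
    (u : EuclideanSpace ℝ (Fin N) → ℝ → ℝ)
    (hcont : ContinuousOn (fun p : EuclideanSpace ℝ (Fin N) × ℝ => u p.1 p.2)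
      (closedBall 0 1 ×ˢ Icc (-1 : ℝ) 0))
    (hx : ∀ t ∈ Ioc (-1 : ℝ) 0, ContDiffOn ℝ 2 (fun x => u x t) (ball 0 1))
    (ht : ∀ x ∈ ball (0 : EuclideanSpace ℝ (Fin N)) 1, ∀ t ∈ Ioc (-1 : ℝ) 0,
      DifferentiableAt ℝ (u x) t)
    (hsuper : ∀ x ∈ ball (0 : EuclideanSpace ℝ (Fin N)) 1, ∀ t ∈ Ioc (-1 : ℝ) 0,
      1 ≤ deriv (u x) t - ∑ i, fderiv ℝ
        (fun y => fderiv ℝ (fun z => u z t) y (EuclideanSpace.single i 1))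
        x (EuclideanSpace.single i 1))
    (hbot : ∀ x ∈ closedBall (0 : EuclideanSpace ℝ (Fin N)) 1, 0 ≤ u x (-1))
    (hlat : ∀ x : EuclideanSpace ℝ (Fin N), ‖x‖ = 1 → ∀ t ∈ Ico (-1 : ℝ) 0, 0 ≤ u x t) :
    ∀ κ : ℝ, κ < 1 → ∀ x : EuclideanSpace ℝ (Fin N), ‖x‖ ≤ κ →
      (1 - κ ^ 2) / (1 + 4 * N) ≤ u x 0 := by
  intro κ hκ x hxκ
  have hdim : Module.finrank ℝ (EuclideanSpace ℝ (Fin N)) = N := finrank_euclideanSpace_fin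
  have hclosure : closure (ball (0 : EuclideanSpace ℝ (Fin N)) 1) = closedBall 0 1 :=
    closure_ball 0 one_ne_zero
  have hu : ∀ y ∈ ball 0 1, ∀ t ∈ Ioc (-1 : ℝ) 0, ContDiffAt ℝ 2 (fun z => u z t) y :=
    fun y hy t ht => (hx t ht).contDiffAt (isOpen_ball.mem_nhds hy)
  have hpos : ∀ y ∈ ball 0 1, ∀ t ∈ Ioc (-1 : ℝ) 0,
      0 < heatOperator (fun z s => u z s - heatBarrier _ z s) y t := by
    refine fun y hy t ht' => heatOperator_sub_heatBarrier_pos (by omega) ht'.2 (hu y hy t ht')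
      (ht y hy t ht') ?_
    rw [heatOperator, laplacian_eq_sum_fderiv_fderiv_single
      ((hu y hy t ht').fderiv_right le_rfl |>.differentiableAt one_ne_zero)]
    exact hsuper y hy t ht'
  have hlat' : ∀ y ∈ sphere (0 : EuclideanSpace ℝ (Fin N)) 1, ∀ t ∈ Icc (-1 : ℝ) 0,
      0 ≤ u y t := fun y hy =>
    ContinuousOn.nonneg_of_nonneg_Ico (by norm_num)
      (hcont.comp (f := fun t : ℝ => (y, t)) (Continuous.continuousOn (by fun_prop))
        fun t ht => mk_mem_prod (sphere_subset_closedBall hy) ht)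
      (hlat y (mem_sphere_zero_iff_norm.1 hy))
  have hw : 0 ≤ u x 0 - heatBarrier _ x 0 :=
    nonneg_of_heatOperator_pos isOpen_ball isBounded_ball
      (hclosure ▸ hcont.sub continuous_heatBarrier.continuousOn)
      (fun y hy t ht => (hu y hy t ht).sub (contDiff_heatBarrier_left t).contDiffAt) hpos
      (fun y hy => by simpa [heatBarrier] using hbot y (hclosure ▸ hy))
      (fun y hy t ht' => by
        rw [frontier_ball 0 one_ne_zero] at hy
        simpa [heatBarrier, mem_sphere_zero_iff_norm.1 hy] using hlat' y hy t ht')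
      x (by rw [hclosure, mem_closedBall_zero_iff]; linarith) 0 (by norm_num)
  have hx0 : (1 - ‖x‖ ^ 2) / (1 + 4 * N) ≤ u x 0 := by simpa [heatBarrier, hdim] using hw
  refine le_trans (div_le_div_of_nonneg_right ?_ (by positivity)) hx0
  nlinarith [norm_nonneg x]
end

section
/- Fix 0 < λ ≤ Λ, N ≥ 1, constants θ ∈ (0,1), δ ∈ (0, θ/2], η, τ₁, τ₂ > 0 with τ₁ ≤ τ₂. Define C₀ = 2(θ² − δ²) + 4(ηθ + (1−θ)θ) + 4ΛNτ₂, and suppose α > C₀(C₀ + 8λτ₁)/(6θ²λτ₁). Define ρ(t) = (θ² − δ²)(1+t) + δ², φ(x,t) = ρ(t) − |x|², and ψ(x,t) = φ(x,t)²·ρ(t)^{−α} on Q̂ = {(x,t) ∈ ℝ^N × (−1, 0] : φ(x,t) > 0}. Then for any drift vector w ∈ ℝ^N with |w| ≤ η + (1−θ) and any a ∈ [τ₁, τ₂], ψ satisfies the pointwise differential inequality ∂_t ψ − a·M⁻(D²ψ) − w·Dψ ≤ 0 throughout Q̂, where M⁻ is the Pucci minimal operator with constants λ, Λ. -/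
open Set

open Classical in
noncomputable def pucciMinus (lam Lam : ℝ) {N : ℕ} (M : Matrix (Fin N) (Fin N) ℝ) : ℝ :=
  if h : M.IsHermitian then
    lam * ∑ i, max (h.eigenvalues i) 0 + Lam * ∑ i, min (h.eigenvalues i) 0
  else 0


lemma my_trace_eq_sum_eig {N : ℕ} {A : Matrix (Fin N) (Fin N) ℝ} (hA : A.IsHermitian) :
    A.trace = ∑ i, hA.eigenvalues i := by
  simp [hA.trace_eq_sum_eigenvalues]

lemma my_dot {N : ℕ} (c β : ℝ) (x v : Fin N → ℝ)
    {A : Matrix (Fin N) (Fin N) ℝ}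
    (hM : ∀ i j, A i j = c * (if i = j then 1 else 0) + β * (x i * x j)) :
    RCLike.re (dotProduct (star v) (A.mulVec v))
      = c * (∑ j, v j ^ 2) + β * (∑ j, x j * v j) ^ 2 := by
  have hrow : ∀ j, (∑ k, A j k * v k) = c * v j + β * x j * ∑ k, x k * v k := by
    intro j
    rw [show (∑ k, A j k * v k)
        = ∑ k, (c * ((if j = k then 1 else 0) * v k) + β * x j * (x k * v k)) from
      Finset.sum_congr rfl fun k _ => by rw [hM]; ring]
    rw [Finset.sum_add_distrib, ← Finset.mul_sum, ← Finset.mul_sum]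
    simp [Finset.sum_ite_eq]
  simp only [RCLike.re_to_real, dotProduct, Matrix.mulVec, dotProduct,
    Pi.star_apply, star_trivial]
  rw [Finset.sum_congr rfl fun j _ => by rw [hrow j]]
  rw [show (∑ j, v j * (c * v j + β * x j * ∑ k, x k * v k))
      = c * (∑ j, v j ^2) + β * ((∑ j, x j * v j) * (∑ j, v j * x j)) by
    rw [Finset.mul_sum, Finset.mul_sum, Finset.mul_sum, ← Finset.sum_add_distrib]
    exact Finset.sum_congr rfl fun j _ => by ring]
  rw [show (∑ j, v j * x j) = ∑ j, x j * v j from Finset.sum_congr rfl fun j _ => mul_comm _ _]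
  ring

lemma my_eig_lb {N : ℕ} {c β : ℝ} (hβ : 0 ≤ β) (x : Fin N → ℝ)
    {A : Matrix (Fin N) (Fin N) ℝ}
    (hM : ∀ i j, A i j = c * (if i = j then 1 else 0) + β * (x i * x j))
    (hA : A.IsHermitian) (i : Fin N) : c ≤ hA.eigenvalues i := by
  have hev := hA.eigenvalues_eq i
  set v : Fin N → ℝ := ⇑(hA.eigenvectorBasis i) with hv
  have hnorm : ∑ j, v j ^ 2 = 1 := by
    have h1 : ‖hA.eigenvectorBasis i‖ = 1 := hA.eigenvectorBasis.orthonormal.1 i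
    have h0 := EuclideanSpace.norm_eq (hA.eigenvectorBasis i)
    rw [h1] at h0
    have h2 : (0:ℝ) ≤ ∑ j, ‖hA.eigenvectorBasis i j‖ ^ 2 :=
      Finset.sum_nonneg fun j _ => by positivity
    have h3 : ∑ j, ‖hA.eigenvectorBasis i j‖ ^ 2 = 1 := by
      nlinarith [Real.sq_sqrt h2, h0]
    simpa [hv, Real.norm_eq_abs, sq_abs] using h3
  rw [hev, my_dot c β x v hM, hnorm]
  nlinarith [sq_nonneg (∑ j, x j * v j)]

lemma pucci_lb (lam Lam : ℝ) (hlam : 0 < lam) (hLam : lam ≤ Lam) {N : ℕ}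
    (c β : ℝ) (hc : c ≤ 0) (hβ : 0 ≤ β) (x : Fin N → ℝ)
    {A : Matrix (Fin N) (Fin N) ℝ}
    (hM : ∀ i j, A i j = c * (if i = j then 1 else 0) + β * (x i * x j)) :
    Lam * N * c + lam * β * (∑ i, x i ^ 2) ≤ pucciMinus lam Lam A := by
  have hA : A.IsHermitian := by
    refine Matrix.IsHermitian.ext fun i j => ?_
    simp only [star_trivial, hM]
    rcases eq_or_ne i j with h | h
    · simp [h]
    · simp only [if_neg h, if_neg (Ne.symm h)]; ring
  rw [pucciMinus, dif_pos hA]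
  have htr : ∑ i, hA.eigenvalues i = N * c + β * ∑ i, x i ^ 2 := by
    rw [← my_trace_eq_sum_eig hA, Matrix.trace]
    have hd : ∀ i, A.diag i = c + β * x i ^ 2 := fun i => by
      rw [Matrix.diag_apply, hM, if_pos rfl]; ring
    rw [Finset.sum_congr rfl fun i _ => hd i, Finset.sum_add_distrib, Finset.sum_const,
      Finset.card_univ, ← Finset.mul_sum]
    simp [nsmul_eq_mul]
  have hlb : ∀ i, c ≤ hA.eigenvalues i := my_eig_lb hβ x hM hA
  have key : ∀ i, lam * hA.eigenvalues i + (Lam - lam) * c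
      ≤ lam * max (hA.eigenvalues i) 0 + Lam * min (hA.eigenvalues i) 0 := by
    intro i
    have h1 : max (hA.eigenvalues i) 0 + min (hA.eigenvalues i) 0 = hA.eigenvalues i :=
      by simpa using max_add_min (hA.eigenvalues i) 0
    have h2 : c ≤ min (hA.eigenvalues i) 0 := le_min (hlb i) hc
    nlinarith [h2, hLam]
  calc Lam * N * c + lam * β * (∑ i, x i ^ 2)
      = ∑ i, (lam * hA.eigenvalues i + (Lam - lam) * c) := by
        rw [Finset.sum_add_distrib, ← Finset.mul_sum, htr]
        simp [Finset.sum_const, Finset.card_univ]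
        ring
    _ ≤ ∑ i, (lam * max (hA.eigenvalues i) 0 + Lam * min (hA.eigenvalues i) 0) :=
        Finset.sum_le_sum fun i _ => key i
    _ = lam * ∑ i, max (hA.eigenvalues i) 0 + Lam * ∑ i, min (hA.eigenvalues i) 0 := by
        rw [Finset.sum_add_distrib, Finset.mul_sum, Finset.mul_sum]


-- spatial gradient: fderiv of z ↦ (K - |z|²)² * C at y, applied to Pi.single j 1
lemma spatial_hasFDeriv {N : ℕ} (K C : ℝ) (y : Fin N → ℝ) :
    HasFDerivAt (fun z : Fin N → ℝ => (K - ∑ i, z i ^ 2) ^ 2 * C)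
      (((2 : ℝ) * (K - ∑ i, y i ^ 2) * C) •
        (-(∑ i : Fin N, (2 * y i) • (ContinuousLinearMap.proj i
          : (Fin N → ℝ) →L[ℝ] ℝ)))) y := by
  have hsq : HasFDerivAt (fun z : Fin N → ℝ => ∑ i, z i ^ 2)
      (∑ i : Fin N, (2 * y i) • (ContinuousLinearMap.proj i : (Fin N → ℝ) →L[ℝ] ℝ)) y := by
    refine HasFDerivAt.fun_sum fun i _ => ?_
    have ha : HasFDerivAt (fun z : Fin N → ℝ => z i)
        (ContinuousLinearMap.proj i : (Fin N → ℝ) →L[ℝ] ℝ) y := hasFDerivAt_apply i y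
    have h := ha.fun_mul ha
    have : HasFDerivAt (fun z : Fin N → ℝ => z i * z i)
        ((2 * y i) • (ContinuousLinearMap.proj i : (Fin N → ℝ) →L[ℝ] ℝ)) y := by
      rw [two_mul, add_smul]
      exact h
    simpa [sq] using this
  have h1 : HasFDerivAt (fun z : Fin N → ℝ => K - ∑ i, z i ^ 2)
      (-(∑ i : Fin N, (2 * y i) • (ContinuousLinearMap.proj i : (Fin N → ℝ) →L[ℝ] ℝ))) y :=
    hsq.const_sub K
  have h2 := (h1.mul h1).mul_const C
  have h2' : HasFDerivAt (fun z : Fin N → ℝ => (K - ∑ i, z i ^ 2) ^ 2 * C)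
      (C • ((K - ∑ i, y i ^ 2) • (-(∑ i : Fin N, (2 * y i) • (ContinuousLinearMap.proj i
          : (Fin N → ℝ) →L[ℝ] ℝ))) + (K - ∑ i, y i ^ 2) • (-(∑ i : Fin N, (2 * y i) •
          (ContinuousLinearMap.proj i : (Fin N → ℝ) →L[ℝ] ℝ))))) y := by
    simpa [sq] using h2
  convert h2' using 1
  module

lemma clm_eval1 {N : ℕ} (K C : ℝ) (y : Fin N → ℝ) (j : Fin N) :
    (((2 : ℝ) * (K - ∑ i, y i ^ 2) * C) •
        (-(∑ i : Fin N, (2 * y i) • (ContinuousLinearMap.proj i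
          : (Fin N → ℝ) →L[ℝ] ℝ)))) (Pi.single j 1)
      = -4 * C * ((K - ∑ i, y i ^ 2) * y j) := by
  simp [ContinuousLinearMap.sum_apply, Pi.single_apply, Finset.sum_ite_eq, mul_comm]
  ring


lemma time_hasDerivAt (A B r2 α t : ℝ) (hpos : 0 < A * (1 + t) + B) :
    HasDerivAt (fun s : ℝ => (A * (1 + s) + B - r2) ^ 2 * (A * (1 + s) + B) ^ (-α))
      (2 * (A * (1 + t) + B - r2) * A * (A * (1 + t) + B) ^ (-α)
        + (A * (1 + t) + B - r2) ^ 2 * (-α * (A * (1 + t) + B) ^ (-α - 1) * A)) t := by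
  have hρ : HasDerivAt (fun s : ℝ => A * (1 + s) + B) A t := by
    have := (((hasDerivAt_id t).const_add 1).const_mul A).add_const B
    simpa using this
  have hφ : HasDerivAt (fun s : ℝ => (A * (1 + s) + B - r2) ^ 2)
      (2 * (A * (1 + t) + B - r2) * A) t := by
    have := ((hρ.sub_const r2).fun_pow 2)
    simpa [mul_comm, mul_assoc, mul_left_comm] using this
  have hpow : HasDerivAt (fun s : ℝ => (A * (1 + s) + B) ^ (-α))
      (-α * (A * (1 + t) + B) ^ (-α - 1) * A) t := by
    have h := (Real.hasDerivAt_rpow_const (p := -α) (Or.inl (ne_of_gt hpos))).comp t hρ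
    simpa [Function.comp_def, mul_comm, mul_assoc, mul_left_comm] using h
  have := hφ.fun_mul hpow
  convert this using 1

-- Hessian second step: fderiv of y ↦ -4*C*((K - ∑ y i²) * y j)
lemma hess_hasFDeriv {N : ℕ} (K C : ℝ) (x : Fin N → ℝ) (j : Fin N) :
    HasFDerivAt (fun y : Fin N → ℝ => -4 * C * ((K - ∑ i, y i ^ 2) * y j))
      ((-4 * C) • ((K - ∑ i, x i ^ 2) • (ContinuousLinearMap.proj j : (Fin N → ℝ) →L[ℝ] ℝ)
        + x j • (-(∑ i : Fin N, (2 * x i) • (ContinuousLinearMap.proj i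
          : (Fin N → ℝ) →L[ℝ] ℝ))))) x := by
  have hsq : HasFDerivAt (fun z : Fin N → ℝ => ∑ i, z i ^ 2)
      (∑ i : Fin N, (2 * x i) • (ContinuousLinearMap.proj i : (Fin N → ℝ) →L[ℝ] ℝ)) x := by
    refine HasFDerivAt.fun_sum fun i _ => ?_
    have ha : HasFDerivAt (fun z : Fin N → ℝ => z i)
        (ContinuousLinearMap.proj i : (Fin N → ℝ) →L[ℝ] ℝ) x := hasFDerivAt_apply i x
    have h := ha.fun_mul ha
    have : HasFDerivAt (fun z : Fin N → ℝ => z i * z i)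
        ((2 * x i) • (ContinuousLinearMap.proj i : (Fin N → ℝ) →L[ℝ] ℝ)) x := by
      rw [two_mul, add_smul]
      exact h
    simpa [sq] using this
  have h1 := hsq.const_sub K
  have ha : HasFDerivAt (fun z : Fin N → ℝ => z j)
      (ContinuousLinearMap.proj j : (Fin N → ℝ) →L[ℝ] ℝ) x := hasFDerivAt_apply j x
  exact (h1.mul ha).const_mul (-4 * C)

lemma clm_eval2 {N : ℕ} (K C : ℝ) (x : Fin N → ℝ) (i j : Fin N) :
    ((-4 * C) • ((K - ∑ i, x i ^ 2) • (ContinuousLinearMap.proj j : (Fin N → ℝ) →L[ℝ] ℝ)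
        + x j • (-(∑ i : Fin N, (2 * x i) • (ContinuousLinearMap.proj i
          : (Fin N → ℝ) →L[ℝ] ℝ))))) (Pi.single i 1)
      = (-4 * C * (K - ∑ i, x i ^ 2)) * (if i = j then 1 else 0) + (8 * C) * (x i * x j) := by
  simp [ContinuousLinearMap.sum_apply, Pi.single_apply, Finset.sum_ite_eq, eq_comm]
  rcases eq_or_ne i j with h | h
  · simp [h]; ring
  · simp [h, Ne.symm h]; ring


set_option maxHeartbeats 1000000 in
lemma final_ineq (lam Lam : ℝ) (hlam : 0 < lam) (hLam : lam ≤ Lam) (N : ℕ) (hN : 1 ≤ N)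
    (θ δ η τ₁ τ₂ : ℝ) (hθ0 : 0 < θ) (hθ1 : θ < 1) (hδ0 : 0 < δ) (hδθ : δ ≤ θ / 2)
    (hη : 0 < η) (hτ₁ : 0 < τ₁) (hτ₁₂ : τ₁ ≤ τ₂)
    (C₀ : ℝ) (hC₀ : C₀ = 2 * (θ ^ 2 - δ ^ 2) + 4 * (η * θ + (1 - θ) * θ) + 4 * Lam * N * τ₂)
    (α : ℝ) (hα : C₀ * (C₀ + 8 * lam * τ₁) / (6 * θ ^ 2 * lam * τ₁) < α)
    (a : ℝ) (ha1 : τ₁ ≤ a) (ha2 : a ≤ τ₂)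
    (K r2 C S : ℝ) (hCpos : 0 < C)
    (hr2 : 0 ≤ r2) (hφ : 0 < K - r2) (hKθ : K ≤ θ ^ 2)
    (hS : S ≤ (η + (1 - θ)) * θ) :
    2 * (K - r2) * (θ ^ 2 - δ ^ 2) * C + (K - r2) ^ 2 * (-α * (C / K) * (θ ^ 2 - δ ^ 2))
      - a * (Lam * ↑N * (-4 * C * (K - r2)) + lam * (8 * C) * r2)
      - (-4 * C * (K - r2)) * S ≤ 0 := by
  have hK : 0 < K := by linarith
  have hNR : (1 : ℝ) ≤ (N : ℝ) := by exact_mod_cast hN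
  have hA : 0 < θ ^ 2 - δ ^ 2 := by nlinarith
  have hC₀pos : 0 < C₀ := by
    rw [hC₀]
    have h1 : 0 < η * θ + (1 - θ) * θ := by nlinarith
    have hL0 : 0 < Lam := lt_of_lt_of_le hlam hLam
    have hN0 : (0:ℝ) < N := by linarith
    have hτ₂0 : 0 < τ₂ := lt_of_lt_of_le hτ₁ hτ₁₂
    have h2 : 0 < Lam * N * τ₂ := mul_pos (mul_pos hL0 hN0) hτ₂0
    nlinarith
  have hαpos : 0 < α := by
    have hden : 0 < 6 * θ ^ 2 * lam * τ₁ := by positivity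
    have h8 : 0 < C₀ + 8 * lam * τ₁ := by nlinarith
    have : 0 < C₀ * (C₀ + 8 * lam * τ₁) := mul_pos hC₀pos h8
    exact lt_trans (div_pos this hden) hα
  obtain ⟨φ, hφdef⟩ : ∃ φ : ℝ, φ = K - r2 := ⟨_, rfl⟩
  obtain ⟨T, hTdef⟩ : ∃ T : ℝ, T = α * φ ^ 2 * (θ ^ 2 - δ ^ 2) / K := ⟨_, rfl⟩
  rw [← hφdef]
  have hφ' : 0 < φ := hφdef ▸ hφ
  have hT : T * K = α * φ ^ 2 * (θ ^ 2 - δ ^ 2) := by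
    rw [hTdef]; field_simp
  have hTnn : 0 ≤ T := by rw [hTdef]; positivity
  -- rewrite goal as C * G
  have hgoal : 2 * φ * (θ ^ 2 - δ ^ 2) * C + φ ^ 2 * (-α * (C / K) * (θ ^ 2 - δ ^ 2))
      - a * (Lam * ↑N * (-4 * C * φ) + lam * (8 * C) * r2)
      - (-4 * C * φ) * S
      = C * (2 * φ * (θ ^ 2 - δ ^ 2) + 4 * a * Lam * ↑N * φ - 8 * a * lam * r2 + 4 * φ * S - T) := by
    rw [hTdef]
    field_simp
    ring
  rw [hgoal]
  have hG : 2 * φ * (θ ^ 2 - δ ^ 2) + 4 * a * Lam * ↑N * φ - 8 * a * lam * r2 + 4 * φ * S - T ≤ 0 := by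
    have hLamN : 0 ≤ Lam * ↑N * φ := by
      have : 0 < Lam := lt_of_lt_of_le hlam hLam
      positivity
    have haΛ : a * (Lam * ↑N * φ) ≤ τ₂ * (Lam * ↑N * φ) :=
      mul_le_mul_of_nonneg_right ha2 hLamN
    have haLam : τ₁ * (lam * r2) ≤ a * (lam * r2) :=
      mul_le_mul_of_nonneg_right ha1 (by positivity)
    have h4S : φ * S ≤ φ * ((η + (1 - θ)) * θ) := mul_le_mul_of_nonneg_left hS hφ'.le
    have hCφ : C₀ * φ = 2 * (θ ^ 2 - δ ^ 2) * φ + 4 * (η * θ + (1 - θ) * θ) * φ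
        + 4 * Lam * ↑N * τ₂ * φ := by rw [hC₀]; ring
    rcases le_or_gt (C₀ * φ) (8 * lam * τ₁ * r2) with h1 | h2
    · linarith [haΛ, haLam, h4S, hTnn, h1, hCφ]
    · have hexp : 8 * lam * τ₁ * K = 8 * lam * τ₁ * φ + 8 * lam * τ₁ * r2 := by
        rw [hφdef]; ring
      have hKφ : 8 * lam * τ₁ * K < (C₀ + 8 * lam * τ₁) * φ := by linarith [h2, hexp]
      have hαA : C₀ * (C₀ + 8 * lam * τ₁) < α * (6 * θ ^ 2 * lam * τ₁) := by
        have hden : 0 < 6 * θ ^ 2 * lam * τ₁ := by positivity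
        have := (div_lt_iff₀ hden).mp hα
        linarith
      have h8A : 6 * θ ^ 2 ≤ 8 * (θ ^ 2 - δ ^ 2) := by nlinarith
      have s1 := mul_le_mul_of_nonneg_left hKφ.le hC₀pos.le
      have s2 := mul_le_mul_of_nonneg_right hαA.le hφ'.le
      have s3 := mul_le_mul_of_nonneg_left h8A
        (show (0:ℝ) ≤ α * lam * τ₁ * φ from by positivity)
      have hCK2 : C₀ * K ≤ α * (θ ^ 2 - δ ^ 2) * φ := by
        have h8 : (0:ℝ) < 8 * lam * τ₁ := by positivity
        refine le_of_mul_le_mul_right ?_ h8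
        linarith [s1, s2, s3]
      have hTC₀ : C₀ * φ ≤ T := by
        refine le_of_mul_le_mul_right ?_ hK
        rw [hT]
        have := mul_le_mul_of_nonneg_right hCK2 hφ'.le
        nlinarith [this]
      have hτr2 : 0 ≤ τ₁ * (lam * r2) := by positivity
      linarith [haΛ, haLam, h4S, hTC₀, hCφ, hτr2]
  have := mul_le_mul_of_nonneg_left hG hCpos.le
  simpa using this

theorem barrier_subsolution_computation (lam Lam : ℝ) (hlam : 0 < lam) (hLam : lam ≤ Lam)
    (N : ℕ) (hN : 1 ≤ N) (θ δ η τ₁ τ₂ : ℝ)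
    (hθ : θ ∈ Ioo (0 : ℝ) 1) (hδ : δ ∈ Ioc 0 (θ / 2))
    (hη : 0 < η) (hτ₁ : 0 < τ₁) (hτ₁₂ : τ₁ ≤ τ₂)
    (C₀ : ℝ) (hC₀ : C₀ = 2 * (θ ^ 2 - δ ^ 2) + 4 * (η * θ + (1 - θ) * θ) + 4 * Lam * N * τ₂)
    (α : ℝ) (hα : C₀ * (C₀ + 8 * lam * τ₁) / (6 * θ ^ 2 * lam * τ₁) < α) :
    ∀ w : Fin N → ℝ, Real.sqrt (∑ i, w i ^ 2) ≤ η + (1 - θ) →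
    ∀ a ∈ Icc τ₁ τ₂, ∀ (x : Fin N → ℝ) (t : ℝ), -1 < t → t ≤ 0 →
    0 < (θ ^ 2 - δ ^ 2) * (1 + t) + δ ^ 2 - ∑ i, x i ^ 2 →
      deriv (fun s : ℝ => ((θ ^ 2 - δ ^ 2) * (1 + s) + δ ^ 2 - ∑ i, x i ^ 2) ^ 2
          * ((θ ^ 2 - δ ^ 2) * (1 + s) + δ ^ 2) ^ (-α)) t
        - a * pucciMinus lam Lam (Matrix.of fun i j =>
            fderiv ℝ (fun y => fderiv ℝ
              (fun z : Fin N → ℝ => ((θ ^ 2 - δ ^ 2) * (1 + t) + δ ^ 2 - ∑ i, z i ^ 2) ^ 2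
                * ((θ ^ 2 - δ ^ 2) * (1 + t) + δ ^ 2) ^ (-α))
              y (Pi.single j 1)) x (Pi.single i 1))
        - ∑ i, w i * fderiv ℝ
            (fun y : Fin N → ℝ => ((θ ^ 2 - δ ^ 2) * (1 + t) + δ ^ 2 - ∑ i, y i ^ 2) ^ 2
              * ((θ ^ 2 - δ ^ 2) * (1 + t) + δ ^ 2) ^ (-α))
            x (Pi.single i 1)
      ≤ 0 := by
  intro w hw a ha x t ht1 ht2 hpos
  obtain ⟨hθ0, hθ1⟩ := hθ
  obtain ⟨hδ0, hδθ2⟩ := hδ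
  obtain ⟨ha1, ha2⟩ := ha
  have hr2 : 0 ≤ ∑ i, x i ^ 2 := Finset.sum_nonneg fun i _ => sq_nonneg _
  have hK : 0 < ((θ ^ 2 - δ ^ 2) * (1 + t) + δ ^ 2) := by linarith
  have hCpos : 0 < ((θ ^ 2 - δ ^ 2) * (1 + t) + δ ^ 2) ^ (-α) := Real.rpow_pos_of_pos hK _
  have hA : 0 < θ ^ 2 - δ ^ 2 := by nlinarith
  have hKθ : ((θ ^ 2 - δ ^ 2) * (1 + t) + δ ^ 2) ≤ θ ^ 2 := by nlinarith [mul_nonneg hA.le (neg_nonneg.2 ht2)]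
  -- time derivative
  rw [(time_hasDerivAt (θ ^ 2 - δ ^ 2) (δ ^ 2) (∑ i, x i ^ 2) α t hK).deriv]
  -- rpow simplification
  rw [show (((θ ^ 2 - δ ^ 2) * (1 + t) + δ ^ 2) : ℝ) ^ (-α - 1) = ((θ ^ 2 - δ ^ 2) * (1 + t) + δ ^ 2) ^ (-α) / ((θ ^ 2 - δ ^ 2) * (1 + t) + δ ^ 2) from by
    rw [Real.rpow_sub hK, Real.rpow_one]]
  -- gradient entries
  have hgrad : ∀ j : Fin N, fderiv ℝ
      (fun y : Fin N → ℝ => ((θ ^ 2 - δ ^ 2) * (1 + t) + δ ^ 2 - ∑ i, y i ^ 2) ^ 2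
        * ((θ ^ 2 - δ ^ 2) * (1 + t) + δ ^ 2) ^ (-α)) x (Pi.single j 1)
      = -4 * ((θ ^ 2 - δ ^ 2) * (1 + t) + δ ^ 2) ^ (-α) * ((((θ ^ 2 - δ ^ 2) * (1 + t) + δ ^ 2) - ∑ i, x i ^ 2) * x j) := fun j => by
    rw [(spatial_hasFDeriv ((θ ^ 2 - δ ^ 2) * (1 + t) + δ ^ 2) (((θ ^ 2 - δ ^ 2) * (1 + t) + δ ^ 2) ^ (-α)) x).fderiv]
    exact clm_eval1 _ _ x j
  simp only [hgrad]
  have hsum : ∑ i, w i * (-4 * ((θ ^ 2 - δ ^ 2) * (1 + t) + δ ^ 2) ^ (-α) * ((((θ ^ 2 - δ ^ 2) * (1 + t) + δ ^ 2) - ∑ i, x i ^ 2) * x i))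
      = (-4 * ((θ ^ 2 - δ ^ 2) * (1 + t) + δ ^ 2) ^ (-α) * (((θ ^ 2 - δ ^ 2) * (1 + t) + δ ^ 2) - ∑ i, x i ^ 2)) * ∑ i, w i * x i := by
    rw [Finset.mul_sum]; exact Finset.sum_congr rfl fun i _ => by ring
  rw [hsum]
  -- Hessian entries
  have hM : ∀ i j : Fin N, (Matrix.of fun i j =>
      fderiv ℝ (fun y => fderiv ℝ
        (fun z : Fin N → ℝ => ((θ ^ 2 - δ ^ 2) * (1 + t) + δ ^ 2 - ∑ i, z i ^ 2) ^ 2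
          * ((θ ^ 2 - δ ^ 2) * (1 + t) + δ ^ 2) ^ (-α)) y (Pi.single j 1)) x (Pi.single i 1)) i j
      = (-4 * ((θ ^ 2 - δ ^ 2) * (1 + t) + δ ^ 2) ^ (-α) * (((θ ^ 2 - δ ^ 2) * (1 + t) + δ ^ 2) - ∑ i, x i ^ 2)) * (if i = j then 1 else 0)
        + (8 * ((θ ^ 2 - δ ^ 2) * (1 + t) + δ ^ 2) ^ (-α)) * (x i * x j) := by
    intro i j
    simp only [Matrix.of_apply]
    have hfun : (fun y : Fin N → ℝ => fderiv ℝ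
        (fun z : Fin N → ℝ => ((θ ^ 2 - δ ^ 2) * (1 + t) + δ ^ 2 - ∑ i, z i ^ 2) ^ 2
          * ((θ ^ 2 - δ ^ 2) * (1 + t) + δ ^ 2) ^ (-α)) y (Pi.single j 1))
        = fun y : Fin N → ℝ => -4 * ((θ ^ 2 - δ ^ 2) * (1 + t) + δ ^ 2) ^ (-α) * ((((θ ^ 2 - δ ^ 2) * (1 + t) + δ ^ 2) - ∑ i, y i ^ 2) * y j) :=
      funext fun y => by
        rw [(spatial_hasFDeriv ((θ ^ 2 - δ ^ 2) * (1 + t) + δ ^ 2) (((θ ^ 2 - δ ^ 2) * (1 + t) + δ ^ 2) ^ (-α)) y).fderiv]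
        exact clm_eval1 _ _ y j
    rw [hfun, (hess_hasFDeriv ((θ ^ 2 - δ ^ 2) * (1 + t) + δ ^ 2) (((θ ^ 2 - δ ^ 2) * (1 + t) + δ ^ 2) ^ (-α)) x j).fderiv]
    exact clm_eval2 _ _ x i j
  have hc : -4 * ((θ ^ 2 - δ ^ 2) * (1 + t) + δ ^ 2) ^ (-α) * (((θ ^ 2 - δ ^ 2) * (1 + t) + δ ^ 2) - ∑ i, x i ^ 2) ≤ 0 := by nlinarith
  have hβ : (0:ℝ) ≤ 8 * ((θ ^ 2 - δ ^ 2) * (1 + t) + δ ^ 2) ^ (-α) := by linarith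
  have hP := pucci_lb lam Lam hlam hLam _ _ hc hβ x hM
  have hP' := mul_le_mul_of_nonneg_left hP (le_trans hτ₁.le ha1)
  -- Cauchy-Schwarz
  have hxθ : Real.sqrt (∑ i, x i ^ 2) ≤ θ := by
    have h1 : ∑ i, x i ^ 2 ≤ θ ^ 2 := by linarith
    calc Real.sqrt (∑ i, x i ^ 2) ≤ Real.sqrt (θ ^ 2) := Real.sqrt_le_sqrt h1
      _ = θ := Real.sqrt_sq hθ0.le
  have hCS : ∑ i, w i * x i ≤ (η + (1 - θ)) * θ := by
    have h1 : (∑ i, w i * x i) ^ 2 ≤ (∑ i, w i ^ 2) * ∑ i, x i ^ 2 :=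
      Finset.sum_mul_sq_le_sq_mul_sq _ _ _
    have h2 : ∑ i, w i * x i ≤ Real.sqrt ((∑ i, w i ^ 2) * ∑ i, x i ^ 2) := by
      calc ∑ i, w i * x i ≤ |∑ i, w i * x i| := le_abs_self _
        _ = Real.sqrt ((∑ i, w i * x i) ^ 2) := (Real.sqrt_sq_eq_abs _).symm
        _ ≤ _ := Real.sqrt_le_sqrt h1
    rw [Real.sqrt_mul (Finset.sum_nonneg fun i _ => sq_nonneg _)] at h2
    have h3 : Real.sqrt (∑ i, w i ^ 2) * Real.sqrt (∑ i, x i ^ 2) ≤ (η + (1 - θ)) * θ :=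
      mul_le_mul hw hxθ (Real.sqrt_nonneg _) (by linarith)
    linarith
  have hfin := final_ineq lam Lam hlam hLam N hN θ δ η τ₁ τ₂ hθ0 hθ1 hδ0 hδθ2 hη hτ₁ hτ₁₂
    C₀ hC₀ α hα a ha1 ha2 (((θ ^ 2 - δ ^ 2) * (1 + t) + δ ^ 2)) (∑ i, x i ^ 2) (((θ ^ 2 - δ ^ 2) * (1 + t) + δ ^ 2) ^ (-α)) (∑ i, w i * x i)
    hCpos hr2 hpos hKθ hCS
  linarith [hP', hfin]
end
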